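/- arXiv:2304.03340 — 3 statements merged into one kernel-verified Lean document; each statement's English description precedes it below -/
import Mathlib

section
/- Let α, β : ℝ × E → ℝ be C² scalar fields moving with the fluid, i.e. ∂α/∂t + D_x α (u) = 0 and ∂β/∂t + D_x β (u) = 0. Then the vector field W(t, x) := ∇α(t, x) × ∇β(t, x) (cross product of the spatial gradients) satisfies ∂W/∂t + D_x W (u) + W · div u − D_x u (W) = 0, i.e. the 2-form field ∂α/∂x ∧ ∂β/∂x is moving with the fluid. -/
noncomputable section

local notation "E3" => EuclideanSpace ℝ (Fin 3)

/-- divergence of a vector field: trace of its Fréchet derivative. -/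
def divv (w : E3 → E3) (x : E3) : ℝ :=
  LinearMap.trace ℝ E3 (fderiv ℝ w x : E3 →ₗ[ℝ] E3)

/-- the usual cross product on `EuclideanSpace ℝ (Fin 3)`. -/
def crossE (a b : E3) : E3 :=
  (WithLp.equiv 2 (Fin 3 → ℝ)).symm
    ![a 1 * b 2 - a 2 * b 1, a 2 * b 0 - a 0 * b 2, a 0 * b 1 - a 1 * b 0]

lemma grad_apply (f : E3 → ℝ) (x : E3) (i : Fin 3) :
    gradient f x i = fderiv ℝ f x (EuclideanSpace.single i 1) := by
  have h : (inner ℝ (gradient f x) (EuclideanSpace.single i (1:ℝ) : E3) : ℝ)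
      = fderiv ℝ f x (EuclideanSpace.single i 1) := by
    rw [gradient]; exact InnerProductSpace.toDual_symm_apply
  rw [EuclideanSpace.inner_single_right] at h
  simp only [one_mul, conj_trivial] at h
  exact h

lemma hasFDerivAt_partial {G : Type*} [NormedAddCommGroup G] [NormedSpace ℝ G]
    {f : ℝ × E3 → G} {t : ℝ} {x : E3} (hf : DifferentiableAt ℝ f (t, x)) :
    HasFDerivAt (fun y => f (t, y))
      ((fderiv ℝ f (t, x)).comp (ContinuousLinearMap.inr ℝ ℝ E3)) x :=
  hf.hasFDerivAt.comp x (hasFDerivAt_prodMk_right t x)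

lemma hasDerivAt_partial {G : Type*} [NormedAddCommGroup G] [NormedSpace ℝ G]
    {f : ℝ × E3 → G} {t : ℝ} {x : E3} (hf : DifferentiableAt ℝ f (t, x)) :
    HasDerivAt (fun τ => f (τ, x)) (fderiv ℝ f (t, x) (1, 0)) t :=
  hf.hasFDerivAt.comp_hasDerivAt t ((hasDerivAt_id t).prodMk (hasDerivAt_const t x))

lemma vec_decomp (v : E3) :
    v = ∑ i : Fin 3, v i • (EuclideanSpace.single i (1:ℝ) : E3) := by
  ext j
  simp [Fin.sum_univ_three, EuclideanSpace.single_apply]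
  fin_cases j <;> simp

lemma clm_apply_sum {G : Type*} [NormedAddCommGroup G] [NormedSpace ℝ G]
    (L : E3 →L[ℝ] G) (v : E3) :
    L v = ∑ i : Fin 3, v i • L (EuclideanSpace.single i 1) := by
  conv_lhs => rw [vec_decomp v]
  rw [map_sum]
  simp

lemma clm_apply_comp (L : E3 →L[ℝ] E3) (v : E3) (k : Fin 3) :
    L v k = ∑ i : Fin 3, v i * L (EuclideanSpace.single i 1) k := by
  rw [clm_apply_sum L v]
  simp [Fin.sum_univ_three]

lemma divv_eq_sum (w : E3 → E3) (x : E3) :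
    divv w x = ∑ i : Fin 3, fderiv ℝ w x (EuclideanSpace.single i 1) i := by
  rw [divv, LinearMap.trace_eq_matrix_trace ℝ ((EuclideanSpace.basisFun (Fin 3) ℝ).toBasis)]
  rw [Matrix.trace]
  refine Finset.sum_congr rfl fun i _ => ?_
  simp [LinearMap.toMatrix_apply, Matrix.diag]

lemma key_transport
    (u : ℝ → E3 → E3) (hu : ContDiff ℝ (⊤ : ℕ∞) (Function.uncurry u))
    (α : ℝ → E3 → ℝ) (hα : ContDiff ℝ 2 (Function.uncurry α))
    (hLie : ∀ t x, deriv (fun τ => α τ x) t + fderiv ℝ (α t) x (u t x) = 0)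
    (t : ℝ) (x : E3) (i : Fin 3) :
    HasDerivAt (fun τ => gradient (α τ) x i)
        (fderiv ℝ (fderiv ℝ (Function.uncurry α)) (t, x) (1, 0) (0, EuclideanSpace.single i 1)) t
    ∧ HasFDerivAt (fun y => gradient (α t) y i)
        (((fderiv ℝ (fderiv ℝ (Function.uncurry α)) (t, x)).flip (0, EuclideanSpace.single i 1)).comp
          (ContinuousLinearMap.inr ℝ ℝ E3)) x
    ∧ fderiv ℝ (fderiv ℝ (Function.uncurry α)) (t, x) (1, 0) (0, EuclideanSpace.single i 1)
        + fderiv ℝ (fderiv ℝ (Function.uncurry α)) (t, x) (0, u t x) (0, EuclideanSpace.single i 1)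
      = -∑ j, fderiv ℝ (u t) x (EuclideanSpace.single i 1) j * gradient (α t) x j := by
  set F : ℝ × E3 → ℝ := Function.uncurry α with hF
  set Φ : ℝ × E3 → ((ℝ × E3) →L[ℝ] ℝ) := fderiv ℝ F with hΦdef
  have hF1 : Differentiable ℝ F := hα.differentiable two_ne_zero
  have hΦ : ContDiff ℝ 1 Φ := hα.fderiv_right le_rfl
  have hΦd : Differentiable ℝ Φ := hΦ.differentiable one_ne_zero
  set F'' : (ℝ × E3) →L[ℝ] ((ℝ × E3) →L[ℝ] ℝ) := fderiv ℝ Φ (t, x) with hF''def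
  have hΦp : HasFDerivAt Φ F'' (t, x) := (hΦd (t, x)).hasFDerivAt
  have hsymm : ∀ v w, F'' v w = F'' w v :=
    second_derivative_symmetric (fun y => (hF1 y).hasFDerivAt) hΦp
  -- partial derivative conversions
  have hpart : ∀ (τ : ℝ) (y : E3),
      fderiv ℝ (α τ) y = (Φ (τ, y)).comp (ContinuousLinearMap.inr ℝ ℝ E3) := by
    intro τ y
    exact (hasFDerivAt_partial (hF1 (τ, y))).fderiv
  have htime : ∀ (τ : ℝ) (y : E3), deriv (fun σ => α σ y) τ = Φ (τ, y) (1, 0) := by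
    intro τ y
    exact (hasDerivAt_partial (hF1 (τ, y))).deriv
  have hU : Differentiable ℝ (Function.uncurry u) := hu.differentiable (by simp)
  set U' : (ℝ × E3) →L[ℝ] E3 := fderiv ℝ (Function.uncurry u) (t, x) with hU'def
  have hMpart : fderiv ℝ (u t) x = U'.comp (ContinuousLinearMap.inr ℝ ℝ E3) :=
    (hasFDerivAt_partial (hU (t, x))).fderiv
  -- the transport identity, globally
  have hZ : ∀ q : ℝ × E3, Φ q (1, Function.uncurry u q) = 0 := by
    rintro ⟨τ, y⟩
    have h1 := hLie τ y
    rw [htime τ y, hpart τ y] at h1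
    have h2 : ((1 : ℝ), Function.uncurry u (τ, y)) = ((1 : ℝ), (0 : E3)) + ((0 : ℝ), u τ y) := by
      simp [Function.uncurry]
    rw [h2, map_add]
    simpa using h1
  -- differentiate it at (t, x)
  have hg : HasFDerivAt (fun q : ℝ × E3 => ((1 : ℝ), Function.uncurry u q))
      ((0 : (ℝ × E3) →L[ℝ] ℝ).prod U') (t, x) := by
    exact (hasFDerivAt_const (1 : ℝ) ((t, x) : ℝ × E3)).prodMk (hU (t, x)).hasFDerivAt
  have hZ' : HasFDerivAt (fun q : ℝ × E3 => Φ q (1, Function.uncurry u q))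
      ((Φ (t, x)).comp ((0 : (ℝ × E3) →L[ℝ] ℝ).prod U')
        + F''.flip (1, Function.uncurry u (t, x))) (t, x) := hΦp.clm_apply hg
  have hZ'' : (fun q : ℝ × E3 => Φ q (1, Function.uncurry u q)) = fun _ => (0 : ℝ) :=
    funext hZ
  rw [hZ''] at hZ'
  have hzero := hZ'.unique (hasFDerivAt_const 0 (t, x))
  have hrel0 : ∀ w : ℝ × E3,
      Φ (t, x) (0, U' w) + F'' w (1, u t x) = 0 := by
    intro w
    have := congrFun (congrArg (fun (L : (ℝ × E3) →L[ℝ] ℝ) => (L : ℝ × E3 → ℝ)) hzero) w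
    simpa [Function.uncurry] using this
  refine ⟨?_, ?_, ?_⟩
  · -- HasDerivAt in time
    have hfun : (fun τ => gradient (α τ) x i)
        = fun τ => Φ (τ, x) ((0 : ℝ), (EuclideanSpace.single i 1 : E3)) := by
      funext τ
      rw [grad_apply, hpart τ x]
      simp
    rw [hfun]
    have hc : HasDerivAt (fun τ : ℝ => Φ (τ, x)) (F'' (1, 0)) t :=
      hΦp.comp_hasDerivAt t ((hasDerivAt_id t).prodMk (hasDerivAt_const t x))
    have := hc.clm_apply (hasDerivAt_const t ((0 : ℝ), (EuclideanSpace.single i 1 : E3)))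
    simpa using this
  · -- HasFDerivAt in space
    have hfun : (fun y => gradient (α t) y i)
        = fun y => Φ (t, y) ((0 : ℝ), (EuclideanSpace.single i 1 : E3)) := by
      funext y
      rw [grad_apply, hpart t y]
      simp
    rw [hfun]
    have hc : HasFDerivAt (fun q : ℝ × E3 => Φ q ((0 : ℝ), (EuclideanSpace.single i 1 : E3)))
        (F''.flip (0, EuclideanSpace.single i 1)) (t, x) := by
      have := hΦp.clm_apply (hasFDerivAt_const ((0 : ℝ), (EuclideanSpace.single i 1 : E3)) (t, x))
      simpa using this
    exact hc.comp x (hasFDerivAt_prodMk_right t x)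
  · -- the relation
    have h1 : F'' (1, 0) (0, EuclideanSpace.single i 1)
        + F'' (0, u t x) (0, EuclideanSpace.single i 1)
        = F'' (1, u t x) (0, EuclideanSpace.single i 1) := by
      have : ((1 : ℝ), u t x) = ((1 : ℝ), (0 : E3)) + ((0 : ℝ), u t x) := by simp
      rw [this, map_add]
      simp
    rw [h1, hsymm]
    have h2 := hrel0 ((0 : ℝ), (EuclideanSpace.single i 1 : E3))
    have h3 : U' ((0 : ℝ), (EuclideanSpace.single i 1 : E3))
        = fderiv ℝ (u t) x (EuclideanSpace.single i 1) := by
      rw [hMpart]; simp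
    have h4 : Φ (t, x) (0, fderiv ℝ (u t) x (EuclideanSpace.single i 1))
        = ∑ j, fderiv ℝ (u t) x (EuclideanSpace.single i 1) j * gradient (α t) x j := by
      have h5 : Φ (t, x) ((0 : ℝ), fderiv ℝ (u t) x (EuclideanSpace.single i 1))
          = fderiv ℝ (α t) x (fderiv ℝ (u t) x (EuclideanSpace.single i 1)) := by
        rw [hpart t x]; simp
      rw [h5, clm_apply_sum]
      refine Finset.sum_congr rfl fun j _ => ?_
      rw [grad_apply]
      simp [smul_eq_mul]
    rw [h3] at h2
    rw [h4] at h2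
    linarith [h2]

set_option maxHeartbeats 1000000 in
/-- If `α` and `β` are scalar fields moving with the fluid, then the
2-form field `dα ∧ dβ`, represented by the vector field `∇α × ∇β`, is moving with
the fluid. -/
theorem wedge_of_gradients_is_transported
    (u : ℝ → E3 → E3)
    (hu : ContDiff ℝ (⊤ : ℕ∞) (Function.uncurry u))
    (α β : ℝ → E3 → ℝ)
    (hα : ContDiff ℝ 2 (Function.uncurry α))
    (hβ : ContDiff ℝ 2 (Function.uncurry β))
    (hαLie : ∀ t x, deriv (fun τ => α τ x) t + fderiv ℝ (α t) x (u t x) = 0)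
    (hβLie : ∀ t x, deriv (fun τ => β τ x) t + fderiv ℝ (β t) x (u t x) = 0) :
    ∀ t x, deriv (fun τ => crossE (gradient (α τ) x) (gradient (β τ) x)) t
        + fderiv ℝ (fun y => crossE (gradient (α t) y) (gradient (β t) y)) x (u t x)
        + divv (u t) x • crossE (gradient (α t) x) (gradient (β t) x)
        - fderiv ℝ (u t) x (crossE (gradient (α t) x) (gradient (β t) x)) = 0 := by
  intro t x
  set dA : Fin 3 → ℝ := fun i =>
    fderiv ℝ (fderiv ℝ (Function.uncurry α)) (t, x) (1, 0) (0, EuclideanSpace.single i 1) with hdAdef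
  set dB : Fin 3 → ℝ := fun i =>
    fderiv ℝ (fderiv ℝ (Function.uncurry β)) (t, x) (1, 0) (0, EuclideanSpace.single i 1) with hdBdef
  set fA : Fin 3 → (E3 →L[ℝ] ℝ) := fun i =>
    ((fderiv ℝ (fderiv ℝ (Function.uncurry α)) (t, x)).flip (0, EuclideanSpace.single i 1)).comp
      (ContinuousLinearMap.inr ℝ ℝ E3) with hfAdef
  set fB : Fin 3 → (E3 →L[ℝ] ℝ) := fun i =>
    ((fderiv ℝ (fderiv ℝ (Function.uncurry β)) (t, x)).flip (0, EuclideanSpace.single i 1)).comp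
      (ContinuousLinearMap.inr ℝ ℝ E3) with hfBdef
  have hdA : ∀ i, HasDerivAt (fun τ => gradient (α τ) x i) (dA i) t :=
    fun i => (key_transport u hu α hα hαLie t x i).1
  have hdB : ∀ i, HasDerivAt (fun τ => gradient (β τ) x i) (dB i) t :=
    fun i => (key_transport u hu β hβ hβLie t x i).1
  have hfA : ∀ i, HasFDerivAt (fun y => gradient (α t) y i) (fA i) x :=
    fun i => (key_transport u hu α hα hαLie t x i).2.1
  have hfB : ∀ i, HasFDerivAt (fun y => gradient (β t) y i) (fB i) x :=
    fun i => (key_transport u hu β hβ hβLie t x i).2.1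
  have hrA : ∀ i, dA i + fA i (u t x)
      = -(fderiv ℝ (u t) x (EuclideanSpace.single i 1) 0 * gradient (α t) x 0
        + fderiv ℝ (u t) x (EuclideanSpace.single i 1) 1 * gradient (α t) x 1
        + fderiv ℝ (u t) x (EuclideanSpace.single i 1) 2 * gradient (α t) x 2) := by
    intro i
    simpa [Fin.sum_univ_three, hdAdef, hfAdef] using (key_transport u hu α hα hαLie t x i).2.2
  have hrB : ∀ i, dB i + fB i (u t x)
      = -(fderiv ℝ (u t) x (EuclideanSpace.single i 1) 0 * gradient (β t) x 0
        + fderiv ℝ (u t) x (EuclideanSpace.single i 1) 1 * gradient (β t) x 1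
        + fderiv ℝ (u t) x (EuclideanSpace.single i 1) 2 * gradient (β t) x 2) := by
    intro i
    simpa [Fin.sum_univ_three, hdBdef, hfBdef] using (key_transport u hu β hβ hβLie t x i).2.2
  set gA : E3 := gradient (α t) x with hgAdef
  set gB : E3 := gradient (β t) x with hgBdef
  set L : (Fin 3 → ℝ) →L[ℝ] E3 :=
    ((PiLp.continuousLinearEquiv 2 ℝ (fun _ : Fin 3 => ℝ)).symm).toContinuousLinearMap with hLdef
  -- time derivative
  have hc0 : HasDerivAt (fun τ => gradient (α τ) x 1 * gradient (β τ) x 2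
      - gradient (α τ) x 2 * gradient (β τ) x 1)
      (dA 1 * gB 2 + gA 1 * dB 2 - (dA 2 * gB 1 + gA 2 * dB 1)) t :=
    ((hdA 1).mul (hdB 2)).sub ((hdA 2).mul (hdB 1))
  have hc1 : HasDerivAt (fun τ => gradient (α τ) x 2 * gradient (β τ) x 0
      - gradient (α τ) x 0 * gradient (β τ) x 2)
      (dA 2 * gB 0 + gA 2 * dB 0 - (dA 0 * gB 2 + gA 0 * dB 2)) t :=
    ((hdA 2).mul (hdB 0)).sub ((hdA 0).mul (hdB 2))
  have hc2 : HasDerivAt (fun τ => gradient (α τ) x 0 * gradient (β τ) x 1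
      - gradient (α τ) x 1 * gradient (β τ) x 0)
      (dA 0 * gB 1 + gA 0 * dB 1 - (dA 1 * gB 0 + gA 1 * dB 0)) t :=
    ((hdA 0).mul (hdB 1)).sub ((hdA 1).mul (hdB 0))
  have hGd : HasDerivAt (fun τ => (![gradient (α τ) x 1 * gradient (β τ) x 2
        - gradient (α τ) x 2 * gradient (β τ) x 1,
      gradient (α τ) x 2 * gradient (β τ) x 0 - gradient (α τ) x 0 * gradient (β τ) x 2,
      gradient (α τ) x 0 * gradient (β τ) x 1 - gradient (α τ) x 1 * gradient (β τ) x 0]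
        : Fin 3 → ℝ))
      ![dA 1 * gB 2 + gA 1 * dB 2 - (dA 2 * gB 1 + gA 2 * dB 1),
        dA 2 * gB 0 + gA 2 * dB 0 - (dA 0 * gB 2 + gA 0 * dB 2),
        dA 0 * gB 1 + gA 0 * dB 1 - (dA 1 * gB 0 + gA 1 * dB 0)] t := by
    apply hasDerivAt_pi.2
    intro i
    fin_cases i
    · exact hc0
    · exact hc1
    · exact hc2
  have hW : HasDerivAt (fun τ => crossE (gradient (α τ) x) (gradient (β τ) x))
      (L ![dA 1 * gB 2 + gA 1 * dB 2 - (dA 2 * gB 1 + gA 2 * dB 1),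
        dA 2 * gB 0 + gA 2 * dB 0 - (dA 0 * gB 2 + gA 0 * dB 2),
        dA 0 * gB 1 + gA 0 * dB 1 - (dA 1 * gB 0 + gA 1 * dB 0)]) t :=
    L.hasFDerivAt.comp_hasDerivAt t hGd
  -- space derivative
  have hD0 : HasFDerivAt (fun y => gradient (α t) y 1 * gradient (β t) y 2
      - gradient (α t) y 2 * gradient (β t) y 1)
      ((gA 1 • fB 2 + gB 2 • fA 1) - (gA 2 • fB 1 + gB 1 • fA 2)) x :=
    ((hfA 1).mul (hfB 2)).sub ((hfA 2).mul (hfB 1))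
  have hD1 : HasFDerivAt (fun y => gradient (α t) y 2 * gradient (β t) y 0
      - gradient (α t) y 0 * gradient (β t) y 2)
      ((gA 2 • fB 0 + gB 0 • fA 2) - (gA 0 • fB 2 + gB 2 • fA 0)) x :=
    ((hfA 2).mul (hfB 0)).sub ((hfA 0).mul (hfB 2))
  have hD2 : HasFDerivAt (fun y => gradient (α t) y 0 * gradient (β t) y 1
      - gradient (α t) y 1 * gradient (β t) y 0)
      ((gA 0 • fB 1 + gB 1 • fA 0) - (gA 1 • fB 0 + gB 0 • fA 1)) x :=
    ((hfA 0).mul (hfB 1)).sub ((hfA 1).mul (hfB 0))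
  have hGf : HasFDerivAt (fun (y : E3) => (![gradient (α t) y 1 * gradient (β t) y 2
        - gradient (α t) y 2 * gradient (β t) y 1,
      gradient (α t) y 2 * gradient (β t) y 0 - gradient (α t) y 0 * gradient (β t) y 2,
      gradient (α t) y 0 * gradient (β t) y 1 - gradient (α t) y 1 * gradient (β t) y 0]
        : Fin 3 → ℝ))
      (ContinuousLinearMap.pi
        ![(gA 1 • fB 2 + gB 2 • fA 1) - (gA 2 • fB 1 + gB 1 • fA 2),
          (gA 2 • fB 0 + gB 0 • fA 2) - (gA 0 • fB 2 + gB 2 • fA 0),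
          (gA 0 • fB 1 + gB 1 • fA 0) - (gA 1 • fB 0 + gB 0 • fA 1)]) x := by
    apply hasFDerivAt_pi.2
    intro i
    fin_cases i
    · exact hD0
    · exact hD1
    · exact hD2
  have hW' : HasFDerivAt (fun y => crossE (gradient (α t) y) (gradient (β t) y))
      (L.comp (ContinuousLinearMap.pi
        ![(gA 1 • fB 2 + gB 2 • fA 1) - (gA 2 • fB 1 + gB 1 • fA 2),
          (gA 2 • fB 0 + gB 0 • fA 2) - (gA 0 • fB 2 + gB 2 • fA 0),
          (gA 0 • fB 1 + gB 1 • fA 0) - (gA 1 • fB 0 + gB 0 • fA 1)])) x :=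
    L.hasFDerivAt.comp x hGf
  rw [hW.deriv, hW'.fderiv, divv_eq_sum]
  have hL : ∀ (v : Fin 3 → ℝ) (k : Fin 3), L v k = v k := fun v k => rfl
  ext k
  have hcross : ∀ (a b : E3) (k : Fin 3), crossE a b k
      = (![a 1 * b 2 - a 2 * b 1, a 2 * b 0 - a 0 * b 2, a 0 * b 1 - a 1 * b 0] : Fin 3 → ℝ) k :=
    fun a b k => rfl
  fin_cases k
  · simp only [PiLp.add_apply, PiLp.sub_apply, PiLp.smul_apply, PiLp.zero_apply, hL,
      ContinuousLinearMap.comp_apply, ContinuousLinearMap.pi_apply, ContinuousLinearMap.add_apply,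
      ContinuousLinearMap.sub_apply, ContinuousLinearMap.smul_apply, ContinuousLinearMap.coe_pi,
      hcross, Matrix.cons_val_zero, Matrix.cons_val_one, Matrix.head_cons, Matrix.cons_val_two,
      Matrix.tail_cons, Fin.sum_univ_three, smul_eq_mul, Fin.isValue, Fin.zero_eta, Fin.mk_one,
      Fin.reduceFinMk]
    rw [clm_apply_comp (fderiv ℝ (u t) x) (crossE gA gB)]
    simp only [PiLp.add_apply, PiLp.sub_apply, PiLp.smul_apply, PiLp.zero_apply, hL,
      ContinuousLinearMap.comp_apply, ContinuousLinearMap.pi_apply, ContinuousLinearMap.add_apply,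
      ContinuousLinearMap.sub_apply, ContinuousLinearMap.smul_apply, ContinuousLinearMap.coe_pi,
      hcross, Matrix.cons_val_zero, Matrix.cons_val_one, Matrix.head_cons, Matrix.cons_val_two,
      Matrix.tail_cons, Fin.sum_univ_three, smul_eq_mul, Fin.isValue, Fin.zero_eta, Fin.mk_one,
      Fin.reduceFinMk]
    linear_combination gB 2 * hrA 1 - gB 1 * hrA 2 + gA 1 * hrB 2 - gA 2 * hrB 1
  · simp only [PiLp.add_apply, PiLp.sub_apply, PiLp.smul_apply, PiLp.zero_apply, hL,
      ContinuousLinearMap.comp_apply, ContinuousLinearMap.pi_apply, ContinuousLinearMap.add_apply,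
      ContinuousLinearMap.sub_apply, ContinuousLinearMap.smul_apply, ContinuousLinearMap.coe_pi,
      hcross, Matrix.cons_val_zero, Matrix.cons_val_one, Matrix.head_cons, Matrix.cons_val_two,
      Matrix.tail_cons, Fin.sum_univ_three, smul_eq_mul, Fin.isValue, Fin.zero_eta, Fin.mk_one,
      Fin.reduceFinMk]
    rw [clm_apply_comp (fderiv ℝ (u t) x) (crossE gA gB)]
    simp only [PiLp.add_apply, PiLp.sub_apply, PiLp.smul_apply, PiLp.zero_apply, hL,
      ContinuousLinearMap.comp_apply, ContinuousLinearMap.pi_apply, ContinuousLinearMap.add_apply,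
      ContinuousLinearMap.sub_apply, ContinuousLinearMap.smul_apply, ContinuousLinearMap.coe_pi,
      hcross, Matrix.cons_val_zero, Matrix.cons_val_one, Matrix.head_cons, Matrix.cons_val_two,
      Matrix.tail_cons, Fin.sum_univ_three, smul_eq_mul, Fin.isValue, Fin.zero_eta, Fin.mk_one,
      Fin.reduceFinMk]
    linear_combination gB 0 * hrA 2 - gB 2 * hrA 0 + gA 2 * hrB 0 - gA 0 * hrB 2
  · simp only [PiLp.add_apply, PiLp.sub_apply, PiLp.smul_apply, PiLp.zero_apply, hL,
      ContinuousLinearMap.comp_apply, ContinuousLinearMap.pi_apply, ContinuousLinearMap.add_apply,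
      ContinuousLinearMap.sub_apply, ContinuousLinearMap.smul_apply, ContinuousLinearMap.coe_pi,
      hcross, Matrix.cons_val_zero, Matrix.cons_val_one, Matrix.head_cons, Matrix.cons_val_two,
      Matrix.tail_cons, Fin.sum_univ_three, smul_eq_mul, Fin.isValue, Fin.zero_eta, Fin.mk_one,
      Fin.reduceFinMk]
    rw [clm_apply_comp (fderiv ℝ (u t) x) (crossE gA gB)]
    simp only [PiLp.add_apply, PiLp.sub_apply, PiLp.smul_apply, PiLp.zero_apply, hL,
      ContinuousLinearMap.comp_apply, ContinuousLinearMap.pi_apply, ContinuousLinearMap.add_apply,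
      ContinuousLinearMap.sub_apply, ContinuousLinearMap.smul_apply, ContinuousLinearMap.coe_pi,
      hcross, Matrix.cons_val_zero, Matrix.cons_val_one, Matrix.head_cons, Matrix.cons_val_two,
      Matrix.tail_cons, Fin.sum_univ_three, smul_eq_mul, Fin.isValue, Fin.zero_eta, Fin.mk_one,
      Fin.reduceFinMk]
    linear_combination gB 1 * hrA 0 - gB 0 * hrA 1 + gA 0 * hrB 1 - gA 1 * hrB 0
end
end

section
/- (Magnetodynamics.) Let H : ℝ × E → E be a C² vector field satisfying div(H(t, ·)) = 0 and ∂H/∂t(t, x) = curl( y ↦ u(t, y) × H(t, y) )(x) for all (t, x). Then H satisfies ∂H/∂t(t, x) + D_x H(t, x)(u(t, x)) + (div u)(t, x) · H(t, x) − D_x u(t, x)(H(t, x)) = 0 for all (t, x); consequently the 2-form det(H, ·, ·) is moving with the fluid. -/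
noncomputable section

local notation "E3" => EuclideanSpace ℝ (Fin 3)

/-- the curl of a vector field on `EuclideanSpace ℝ (Fin 3)`, componentwise in
the standard orthonormal basis. -/
def curlE (w : E3 → E3) (x : E3) : E3 :=
  (WithLp.equiv 2 (Fin 3 → ℝ)).symm
    ![fderiv ℝ w x (EuclideanSpace.single 1 1) 2 - fderiv ℝ w x (EuclideanSpace.single 2 1) 1,
      fderiv ℝ w x (EuclideanSpace.single 2 1) 0 - fderiv ℝ w x (EuclideanSpace.single 0 1) 2,
      fderiv ℝ w x (EuclideanSpace.single 0 1) 1 - fderiv ℝ w x (EuclideanSpace.single 1 1) 0]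

lemma fin3_mk0 (h : 0 < 3) : (⟨0, h⟩ : Fin 3) = 0 := rfl
lemma fin3_mk1 (h : 1 < 3) : (⟨1, h⟩ : Fin 3) = 1 := rfl
lemma fin3_mk2 (h : 2 < 3) : (⟨2, h⟩ : Fin 3) = 2 := rfl

lemma fderiv_comp_proj (w : E3 → E3) (x v : E3) (hw : DifferentiableAt ℝ w x) (i : Fin 3) :
    fderiv ℝ (fun y => w y i) x v = fderiv ℝ w x v i := by
  have h : (fun y => w y i) = (EuclideanSpace.proj i : E3 →L[ℝ] ℝ) ∘ w := rfl
  rw [h, fderiv_comp x (ContinuousLinearMap.differentiableAt _) hw,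
    ContinuousLinearMap.fderiv]
  rfl

lemma trace_eq' (L : E3 →ₗ[ℝ] E3) :
    LinearMap.trace ℝ E3 L = L (EuclideanSpace.single 0 1) 0 + L (EuclideanSpace.single 1 1) 1
      + L (EuclideanSpace.single 2 1) 2 := by
  rw [LinearMap.trace_eq_matrix_trace ℝ ((EuclideanSpace.basisFun (Fin 3) ℝ).toBasis) L]
  simp [Matrix.trace, LinearMap.toMatrix_apply, Fin.sum_univ_three]

lemma fderiv_apply_expand (f : E3 → E3) (x : E3) (hf : DifferentiableAt ℝ f x) (v : E3)
    (i : Fin 3) :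
    fderiv ℝ f x v i = v 0 * fderiv ℝ f x (EuclideanSpace.single 0 1) i
      + v 1 * fderiv ℝ f x (EuclideanSpace.single 1 1) i
      + v 2 * fderiv ℝ f x (EuclideanSpace.single 2 1) i := by
  have hv : v = v 0 • EuclideanSpace.single 0 1 + v 1 • EuclideanSpace.single 1 1
      + v 2 • EuclideanSpace.single 2 1 := by
    ext j; fin_cases j <;> simp
  conv_lhs => rw [hv]
  simp [smul_eq_mul]

/-- Magnetodynamics. A divergence-free magnetic field satisfying
the induction equation `∂H/∂t = curl(u × H)` satisfies the transport equation of a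
2-form moving with the fluid. -/
theorem magnetic_field_two_form_transported
    (u : ℝ → E3 → E3)
    (hu : ContDiff ℝ (⊤ : ℕ∞) (Function.uncurry u))
    (H : ℝ → E3 → E3)
    (hH : ContDiff ℝ 2 (Function.uncurry H))
    (hHdiv : ∀ t x, divv (H t) x = 0)
    (hHinduction : ∀ t x, deriv (fun τ => H τ x) t
        = curlE (fun y => crossE (u t y) (H t y)) x) :
    ∀ t x, deriv (fun τ => H τ x) t + fderiv ℝ (H t) x (u t x)
        + divv (u t) x • H t x - fderiv ℝ (u t) x (H t x) = 0 := by
  intro t x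
  have hut : Differentiable ℝ (u t) :=
    (hu.comp (contDiff_const.prodMk contDiff_id)).differentiable (by simp)
  have hHt : Differentiable ℝ (H t) :=
    (hH.comp (contDiff_const.prodMk contDiff_id)).differentiable (by simp)
  have hc : ∀ (f : E3 → E3) (i : Fin 3), Differentiable ℝ f →
      Differentiable ℝ (fun y => f y i) := fun f i hf =>
    (EuclideanSpace.proj i : E3 →L[ℝ] ℝ).differentiable.comp hf
  -- differentiability of the cross-product field
  have hw : Differentiable ℝ (fun y => crossE (u t y) (H t y)) := by
    unfold crossE
    apply (PiLp.continuousLinearEquiv 2 ℝ (fun _ : Fin 3 => ℝ)).symm.differentiable.comp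
    rw [differentiable_pi]
    intro i
    fin_cases i <;> simp <;>
      exact ((hc _ _ hut).mul (hc _ _ hHt)).sub ((hc _ _ hut).mul (hc _ _ hHt))
  -- fderiv of a difference of products of components
  have hprod : ∀ (a b c d : Fin 3) (e : E3),
      fderiv ℝ (fun y => u t y a * H t y b - u t y c * H t y d) x e
        = fderiv ℝ (u t) x e a * H t x b + u t x a * fderiv ℝ (H t) x e b
          - (fderiv ℝ (u t) x e c * H t x d + u t x c * fderiv ℝ (H t) x e d) := by
    intro a b c d e
    rw [fderiv_fun_sub ((hc _ _ hut x).fun_mul (hc _ _ hHt x)) ((hc _ _ hut x).fun_mul (hc _ _ hHt x)),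
      fderiv_fun_mul (hc _ _ hut x) (hc _ _ hHt x), fderiv_fun_mul (hc _ _ hut x) (hc _ _ hHt x)]
    simp only [ContinuousLinearMap.sub_apply, ContinuousLinearMap.add_apply,
      ContinuousLinearMap.smul_apply, smul_eq_mul]
    rw [fderiv_comp_proj _ _ _ (hHt x), fderiv_comp_proj _ _ _ (hut x),
      fderiv_comp_proj _ _ _ (hHt x), fderiv_comp_proj _ _ _ (hut x)]
    ring
  -- components of the cross field
  have hcross0 : (fun y => crossE (u t y) (H t y) 0)
      = fun y => u t y 1 * H t y 2 - u t y 2 * H t y 1 := by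
    funext y; simp [crossE]
  have hcross1 : (fun y => crossE (u t y) (H t y) 1)
      = fun y => u t y 2 * H t y 0 - u t y 0 * H t y 2 := by
    funext y; simp [crossE]
  have hcross2 : (fun y => crossE (u t y) (H t y) 2)
      = fun y => u t y 0 * H t y 1 - u t y 1 * H t y 0 := by
    funext y; simp [crossE]
  have hwcomp : ∀ (k : Fin 3) (e : E3),
      fderiv ℝ (fun y => crossE (u t y) (H t y)) x e k
        = fderiv ℝ (fun y => crossE (u t y) (H t y) k) x e :=
    fun k e => (fderiv_comp_proj _ x e (hw x) k).symm
  have hdivH : fderiv ℝ (H t) x (EuclideanSpace.single 0 1) 0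
      + fderiv ℝ (H t) x (EuclideanSpace.single 1 1) 1
      + fderiv ℝ (H t) x (EuclideanSpace.single 2 1) 2 = 0 := by
    have h := hHdiv t x
    rwa [divv, trace_eq'] at h
  have hdivu : divv (u t) x = fderiv ℝ (u t) x (EuclideanSpace.single 0 1) 0
      + fderiv ℝ (u t) x (EuclideanSpace.single 1 1) 1
      + fderiv ℝ (u t) x (EuclideanSpace.single 2 1) 2 := by
    rw [divv, trace_eq']; rfl
  ext i
  simp only [PiLp.add_apply, PiLp.sub_apply, PiLp.smul_apply, PiLp.zero_apply, smul_eq_mul]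
  rw [hHinduction t x]
  rw [fderiv_apply_expand _ _ (hHt x) _ i, fderiv_apply_expand _ _ (hut x) _ i, hdivu]
  fin_cases i <;> simp only [fin3_mk0, fin3_mk1, fin3_mk2]
  · simp only [curlE, WithLp.equiv_symm_apply, PiLp.toLp_apply, Matrix.cons_val_zero, Matrix.cons_val_one,
      Matrix.head_cons, Matrix.cons_val_two, Matrix.tail_cons]
    rw [hwcomp, hwcomp, hcross2, hcross1, hprod, hprod]
    linear_combination (u t x 0) * hdivH
  · simp only [curlE, WithLp.equiv_symm_apply, PiLp.toLp_apply, Matrix.cons_val_zero, Matrix.cons_val_one,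
      Matrix.head_cons, Matrix.cons_val_two, Matrix.tail_cons]
    rw [hwcomp, hwcomp, hcross0, hcross2, hprod, hprod]
    linear_combination (u t x 1) * hdivH
  · simp only [curlE, WithLp.equiv_symm_apply, PiLp.toLp_apply, Matrix.cons_val_zero, Matrix.cons_val_one,
      Matrix.head_cons, Matrix.cons_val_two, Matrix.tail_cons]
    rw [hwcomp, hwcomp, hcross1, hcross0, hprod, hprod]
    linear_combination (u t x 2) * hdivH
end
end

section
/- (Piola identity used for the electric field.) Let D : ℝ × E → E be a C¹ vector field and fix t. Then for every X ∈ E, det F(t, X) · div( D(t, ·) )(φ(t, X)) = div_X ( X ↦ det F(t, X) · F(t, X)⁻¹ ( D(t, φ(t, X)) ) )(X), i.e. the spatial divergence of D evaluated at φ(t, X) and multiplied by det F equals the reference-space divergence of the Piola transform det F · F⁻¹ D ∘ φ(t, ·). -/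
noncomputable section

local notation "E3" => EuclideanSpace ℝ (Fin 3)

instance : IsScalarTower ℝ (E3 →L[ℝ] E3) (E3 →L[ℝ] E3) :=
  ⟨fun r A g => by ext x; simp⟩

instance : SMulCommClass ℝ (E3 →L[ℝ] E3) (E3 →L[ℝ] E3) :=
  ⟨fun r A g => by ext x; simp⟩

namespace PiolaAux

attribute [local instance] Matrix.normedAddCommGroup Matrix.normedSpace

abbrev Mat := Matrix (Fin 3) (Fin 3) ℝ

/-- entry extraction as a linear map -/
def entryₗ (i j : Fin 3) : Mat →ₗ[ℝ] ℝ where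
  toFun M := M i j
  map_add' _ _ := rfl
  map_smul' _ _ := rfl

def entry (i j : Fin 3) : Mat →L[ℝ] ℝ := LinearMap.toContinuousLinearMap (entryₗ i j)

@[simp] lemma entry_apply (i j : Fin 3) (M : Mat) : entry i j M = M i j := rfl

/-- Jacobi derivative candidate: `H ↦ trace (adjugate M * H)`. -/
def detD (M : Mat) : Mat →L[ℝ] ℝ :=
  LinearMap.toContinuousLinearMap
    ((Matrix.traceLinearMap (Fin 3) ℝ ℝ).comp (LinearMap.mulLeft ℝ M.adjugate))

@[simp] lemma detD_apply (M H : Mat) : detD M H = Matrix.trace (M.adjugate * H) := rfl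

lemma hasFDerivAt_det (M : Mat) : HasFDerivAt Matrix.det (detD M) M := by
  have h : ∀ i j : Fin 3, HasFDerivAt (fun N : Mat => N i j) (entry i j) M := fun i j =>
    (entry i j).hasFDerivAt
  have H := (((((((h 0 0).mul (h 1 1)).mul (h 2 2)).sub
      (((h 0 0).mul (h 1 2)).mul (h 2 1))).sub
      (((h 0 1).mul (h 1 0)).mul (h 2 2))).add
      (((h 0 1).mul (h 1 2)).mul (h 2 0))).add
      (((h 0 2).mul (h 1 0)).mul (h 2 1))).sub
      (((h 0 2).mul (h 1 1)).mul (h 2 0))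
  have heq : (fun N : Mat =>
      N 0 0 * N 1 1 * N 2 2 - N 0 0 * N 1 2 * N 2 1 - N 0 1 * N 1 0 * N 2 2 +
        N 0 1 * N 1 2 * N 2 0 + N 0 2 * N 1 0 * N 2 1 - N 0 2 * N 1 1 * N 2 0)
      = (Matrix.det : Mat → ℝ) := by
    funext N; rw [Matrix.det_fin_three]
  replace H : HasFDerivAt (fun N : Mat =>
      N 0 0 * N 1 1 * N 2 2 - N 0 0 * N 1 2 * N 2 1 - N 0 1 * N 1 0 * N 2 2 +
        N 0 1 * N 1 2 * N 2 0 + N 0 2 * N 1 0 * N 2 1 - N 0 2 * N 1 1 * N 2 0) _ M := H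
  rw [heq] at H
  refine H.congr_fderiv ?_
  refine ContinuousLinearMap.ext fun K => ?_
  erw [detD_apply]
  simp only [detD_apply, Matrix.adjugate_fin_three, Matrix.trace_fin_three, Matrix.mul_apply,
    Fin.sum_univ_three, ContinuousLinearMap.add_apply, ContinuousLinearMap.sub_apply,
    ContinuousLinearMap.smul_apply, entry_apply, smul_eq_mul,
    Matrix.cons_val', Matrix.cons_val_zero, Matrix.cons_val_one, Matrix.head_cons,
    Matrix.empty_val', Matrix.cons_val_fin_one, Matrix.head_fin_const, Matrix.cons_val_two, Matrix.of_apply, Matrix.tail_cons, FunLike.coe_smul, Pi.smul_apply, Pi.mul_apply]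
  repeat erw [smul_apply]
  repeat erw [entry_apply]
  ring


/-- basis of E3 -/
def b3 : Module.Basis (Fin 3) ℝ E3 := PiLp.basisFun 2 ℝ (Fin 3)

/-- matrix representation, as a continuous linear map -/
def T : (E3 →L[ℝ] E3) →L[ℝ] Mat :=
  LinearMap.toContinuousLinearMap
    ((LinearMap.toMatrix b3 b3).toLinearMap ∘ₗ ContinuousLinearMap.coeLM ℝ)

@[simp] lemma T_apply (g : E3 →L[ℝ] E3) :
    T g = LinearMap.toMatrix b3 b3 (g : E3 →ₗ[ℝ] E3) := rfl

lemma T_comp (g h : E3 →L[ℝ] E3) : T (g.comp h) = T g * T h := by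
  simp only [T_apply, ContinuousLinearMap.toLinearMap_comp]
  exact LinearMap.toMatrix_comp b3 b3 b3 _ _

lemma det_T (g : E3 →L[ℝ] E3) : (T g).det = LinearMap.det (g : E3 →ₗ[ℝ] E3) := by
  simp only [T_apply]; exact LinearMap.det_toMatrix b3 _

lemma trace_T (g : E3 →L[ℝ] E3) :
    Matrix.trace (T g) = LinearMap.trace ℝ E3 (g : E3 →ₗ[ℝ] E3) := by
  simp only [T_apply]
  exact (LinearMap.trace_eq_matrix_trace ℝ b3 _).symm

/-- derivative of the determinant on continuous linear maps -/
def jacD (A : E3 ≃L[ℝ] E3) : (E3 →L[ℝ] E3) →L[ℝ] ℝ := (detD (T ↑A)).comp T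

lemma hasFDerivAt_detclm (A : E3 ≃L[ℝ] E3) :
    HasFDerivAt (fun g : E3 →L[ℝ] E3 => LinearMap.det (g : E3 →ₗ[ℝ] E3))
      (jacD A) (A : E3 →L[ℝ] E3) := by
  have H := (hasFDerivAt_det (T ↑A)).comp (A : E3 →L[ℝ] E3) T.hasFDerivAt
  have heq : (Matrix.det ∘ T : (E3 →L[ℝ] E3) → ℝ)
      = fun g : E3 →L[ℝ] E3 => LinearMap.det (g : E3 →ₗ[ℝ] E3) := by
    funext g; exact det_T g
  rw [heq] at H
  exact H

lemma T_symm_mul (A : E3 ≃L[ℝ] E3) : T ↑A.symm * T ↑A = 1 := by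
  rw [← T_comp]
  have : (↑A.symm : E3 →L[ℝ] E3).comp (↑A : E3 →L[ℝ] E3) = ContinuousLinearMap.id ℝ E3 := by
    ext x; simp
  rw [this]
  simp only [T_apply, ContinuousLinearMap.coe_id, LinearMap.toMatrix_id]

lemma T_mul_symm (A : E3 ≃L[ℝ] E3) : T ↑A * T ↑A.symm = 1 := by
  rw [← T_comp]
  have : (↑A : E3 →L[ℝ] E3).comp (↑A.symm : E3 →L[ℝ] E3) = ContinuousLinearMap.id ℝ E3 := by
    ext x; simp
  rw [this]
  simp only [T_apply, ContinuousLinearMap.coe_id, LinearMap.toMatrix_id]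

lemma jacD_apply (A : E3 ≃L[ℝ] E3) (H : E3 →L[ℝ] E3) :
    jacD A H = LinearMap.det ((A : E3 →L[ℝ] E3) : E3 →ₗ[ℝ] E3)
      * LinearMap.trace ℝ E3 (((A.symm : E3 →L[ℝ] E3).comp H : E3 →L[ℝ] E3) : E3 →ₗ[ℝ] E3) := by
  have : jacD A H = Matrix.trace ((T ↑A).adjugate * T H) := rfl
  rw [this]
  have h1 : (T ↑A).adjugate * T H = (T ↑A).det • (T ↑A.symm * T H) := by
    calc (T ↑A).adjugate * T H = (T ↑A).adjugate * ((T ↑A * T ↑A.symm) * T H) := by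
          rw [T_mul_symm, Matrix.one_mul]
      _ = ((T ↑A).adjugate * T ↑A) * (T ↑A.symm * T H) := by
          noncomm_ring
      _ = ((T ↑A).det • (1 : Mat)) * (T ↑A.symm * T H) := by rw [Matrix.adjugate_mul]
      _ = (T ↑A).det • (T ↑A.symm * T H) := by rw [Matrix.smul_mul, Matrix.one_mul]
  rw [h1, Matrix.trace_smul, ← T_comp, trace_T, det_T, smul_eq_mul]

lemma trace_ring (f : ℝ →ₗ[ℝ] ℝ) : LinearMap.trace ℝ ℝ f = f 1 := by
  have : f = f 1 • LinearMap.id := by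
    ext x
    simp [smul_eq_mul, mul_comm, ← f.map_smul]
  rw [this, map_smul, LinearMap.trace_id]
  simp

lemma trace_smulRight (l : E3 →L[ℝ] ℝ) (v : E3) :
    LinearMap.trace ℝ E3 ((l.smulRight v : E3 →L[ℝ] E3) : E3 →ₗ[ℝ] E3) = l v := by
  have h : ((l.smulRight v : E3 →L[ℝ] E3) : E3 →ₗ[ℝ] E3)
      = (LinearMap.toSpanSingleton ℝ E3 v).comp (l : E3 →ₗ[ℝ] ℝ) := by
    ext x
    simp [LinearMap.toSpanSingleton_apply]
  rw [h, LinearMap.trace_comp_comm', trace_ring]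
  simp [LinearMap.toSpanSingleton_apply]

lemma trace_conj (A : E3 ≃L[ℝ] E3) (B : E3 →L[ℝ] E3) :
    LinearMap.trace ℝ E3
      (((A.symm : E3 →L[ℝ] E3).comp (B.comp (↑A : E3 →L[ℝ] E3)) : E3 →L[ℝ] E3) : E3 →ₗ[ℝ] E3)
      = LinearMap.trace ℝ E3 (B : E3 →ₗ[ℝ] E3) := by
  simp only [ContinuousLinearMap.toLinearMap_comp]
  rw [← LinearMap.comp_assoc, LinearMap.trace_comp_comm', ← LinearMap.comp_assoc]
  have : (((A : E3 →L[ℝ] E3) : E3 →ₗ[ℝ] E3)).comp (((A.symm : E3 →L[ℝ] E3) : E3 →ₗ[ℝ] E3))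
      = LinearMap.id := by ext x; simp
  rw [this, LinearMap.id_comp]

end PiolaAux


set_option maxHeartbeats 1000000
open PiolaAux

/-- Piola identity. `det F · (div D) ∘ φ` equals the
reference-space divergence of the Piola transform `det F · F⁻¹ (D ∘ φ)`. -/
theorem piola_identity
    (u φ : ℝ → E3 → E3)
    (F : ℝ → E3 → (E3 ≃L[ℝ] E3))
    (hu : ContDiff ℝ (⊤ : ℕ∞) (Function.uncurry u))
    (hφ0 : ∀ X, φ 0 X = X)
    (hφt : ∀ t X, HasDerivAt (fun τ => φ τ X) (u t (φ t X)) t)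
    (hφsmooth : ∀ t, ContDiff ℝ (⊤ : ℕ∞) (φ t))
    (hφbij : ∀ t, Function.Bijective (φ t))
    (hφinv : ∀ t, ContDiff ℝ (⊤ : ℕ∞) (Function.invFun (φ t)))
    (hF : ∀ t X, (F t X : E3 →L[ℝ] E3) = fderiv ℝ (φ t) X)
    (D : ℝ → E3 → E3)
    (hD : ContDiff ℝ 1 (Function.uncurry D))
    (t : ℝ) :
    ∀ X : E3,
      LinearMap.det ((F t X : E3 →L[ℝ] E3) : E3 →ₗ[ℝ] E3) * divv (D t) (φ t X)
        = divv (fun Y =>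
            LinearMap.det ((F t Y : E3 →L[ℝ] E3) : E3 →ₗ[ℝ] E3)
              • (F t Y).symm (D t (φ t Y))) X := by
  intro X
  have hψd : Differentiable ℝ (φ t) := (hφsmooth t).differentiable (by simp)
  have hf'c : ContDiff ℝ (⊤ : ℕ∞) (fun Y => fderiv ℝ (φ t) Y) := (hφsmooth t).fderiv_right (by simp)
  set A'' : E3 →L[ℝ] E3 →L[ℝ] E3 := fderiv ℝ (fun Y => fderiv ℝ (φ t) Y) X with hA''def
  have hA''d : HasFDerivAt (fun Y => fderiv ℝ (φ t) Y) A'' X :=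
    ((hf'c.differentiable (by simp)) X).hasFDerivAt
  have hsymm : ∀ v w : E3, A'' v w = A'' w v := fun v w =>
    second_derivative_symmetric (fun y => (hψd y).hasFDerivAt) hA''d v w
  have hmul1 : ∀ Y : E3,
      ((F t Y : E3 →L[ℝ] E3) * ((F t Y).symm : E3 →L[ℝ] E3)) = 1 := by
    intro Y; ext x; simp [ContinuousLinearMap.mul_apply]
  have hmul2 : ∀ Y : E3,
      (((F t Y).symm : E3 →L[ℝ] E3) * (F t Y : E3 →L[ℝ] E3)) = 1 := by
    intro Y; ext x; simp [ContinuousLinearMap.mul_apply]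
  have hRinv : ∀ Y : E3,
      Ring.inverse (fderiv ℝ (φ t) Y) = ((F t Y).symm : E3 →L[ℝ] E3) := by
    intro Y
    rw [← hF t Y]
    exact Ring.inverse_unit
      ⟨(F t Y : E3 →L[ℝ] E3), ((F t Y).symm : E3 →L[ℝ] E3), hmul1 Y, hmul2 Y⟩
  have hDt : ContDiff ℝ 1 (D t) := hD.comp (contDiff_const.prodMk contDiff_id)
  set B : E3 →L[ℝ] E3 := fderiv ℝ (D t) (φ t X) with hBdef
  have hψX : HasFDerivAt (φ t) ((F t X : E3 →L[ℝ] E3)) X := by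
    rw [hF t X]; exact (hψd X).hasFDerivAt
  have hw : HasFDerivAt (fun Y => D t (φ t Y)) (B.comp (F t X : E3 →L[ℝ] E3)) X :=
    (((hDt.differentiable one_ne_zero) (φ t X)).hasFDerivAt).comp X hψX
  have hJd : HasFDerivAt
      (fun Y => LinearMap.det ((fderiv ℝ (φ t) Y : E3 →L[ℝ] E3) : E3 →ₗ[ℝ] E3))
      ((jacD (F t X)).comp A'') X := by
    have h1 : HasFDerivAt (fun g : E3 →L[ℝ] E3 => LinearMap.det (g : E3 →ₗ[ℝ] E3))
        (jacD (F t X)) (fderiv ℝ (φ t) X) := by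
      rw [← hF t X]; exact hasFDerivAt_detclm (F t X)
    exact h1.comp X hA''d
  have hInv : HasFDerivAt (fun Y => Ring.inverse (fderiv ℝ (φ t) Y))
      ((-(ContinuousLinearMap.mulLeftRight ℝ (E3 →L[ℝ] E3)
          ((F t X).symm : E3 →L[ℝ] E3) ((F t X).symm : E3 →L[ℝ] E3))).comp A'') X := by
    have h1 : HasFDerivAt (Ring.inverse : (E3 →L[ℝ] E3) → (E3 →L[ℝ] E3))
        (-(ContinuousLinearMap.mulLeftRight ℝ (E3 →L[ℝ] E3)
          ((F t X).symm : E3 →L[ℝ] E3) ((F t X).symm : E3 →L[ℝ] E3))) (fderiv ℝ (φ t) X) := by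
      rw [← hF t X]
      exact hasFDerivAt_ringInverse
        ⟨(F t X : E3 →L[ℝ] E3), ((F t X).symm : E3 →L[ℝ] E3), hmul1 X, hmul2 X⟩
    exact h1.comp X hA''d
  have hG0 := hJd.smul (hInv.clm_apply hw)
  have hfun : (fun Y => LinearMap.det ((F t Y : E3 →L[ℝ] E3) : E3 →ₗ[ℝ] E3)
        • (F t Y).symm (D t (φ t Y)))
      = (fun Y => (LinearMap.det ((fderiv ℝ (φ t) Y : E3 →L[ℝ] E3) : E3 →ₗ[ℝ] E3))
        • (Ring.inverse (fderiv ℝ (φ t) Y)) (D t (φ t Y))) := by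
    funext Y
    rw [hRinv Y, ← hF t Y]
    rfl
  have hQ : (((-(ContinuousLinearMap.mulLeftRight ℝ (E3 →L[ℝ] E3)
        ((F t X).symm : E3 →L[ℝ] E3) ((F t X).symm : E3 →L[ℝ] E3))).comp A'').flip
          (D t (φ t X)))
      = -(((F t X).symm : E3 →L[ℝ] E3).comp
          (A'' (((F t X).symm : E3 →L[ℝ] E3) (D t (φ t X))))) := by
    ext h
    have hs := hsymm h (((F t X).symm : E3 →L[ℝ] E3) (D t (φ t X)))
    simp only [ContinuousLinearMap.flip_apply, ContinuousLinearMap.comp_apply,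
      ContinuousLinearMap.neg_apply, ContinuousLinearMap.mulLeftRight_apply,
      ContinuousLinearMap.mul_apply]
    rw [hs]
  simp only [divv]
  replace hG0 : HasFDerivAt (fun Y => LinearMap.det ((fderiv ℝ (φ t) Y : E3 →L[ℝ] E3) : E3 →ₗ[ℝ] E3)
    • (Ring.inverse (fderiv ℝ (φ t) Y)) (D t (φ t Y))) _ X := hG0
  rw [hfun, hG0.fderiv, ← hBdef]
  beta_reduce
  rw [hRinv X, hQ]
  simp only [ContinuousLinearMap.coe_add, ContinuousLinearMap.coe_smul,
    ContinuousLinearMap.coe_neg, map_add, map_smul, map_neg, smul_eq_mul,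
    trace_smulRight, ContinuousLinearMap.comp_apply]
  rw [jacD_apply, trace_conj, ← hF t X]
  ring
end
end
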